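/- arXiv:1707.01458 — 2 statements merged into one kernel-verified Lean document; each statement's English description precedes it below -/
import Mathlib

section
/- Let L > 0, let κ ≥ 2 be an integer and let M > 0. There exists a constant C > 0, depending only on L, κ and M, such that: for every integer N ≥ 2, every choice of points s̃₁, …, s̃_N ∈ [0, L) satisfying |s̃_i − (i − 1/2)·L/N| ≤ M·N^{−κ} for all 1 ≤ i ≤ N, and every L-periodic function g : ℝ → ℝ of class C^κ, one has |∫₀^L g(s) ds − (L/N)·Σ_{i=1}^{N} g(s̃_i)| ≤ C·N^{−κ}·‖g‖_{C^κ}. -/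
open Real MeasureTheory

/-- The `C^κ` norm of a function: the maximum over `0 ≤ m ≤ κ` of the sup of the
`m`-th derivative. -/
noncomputable def Cnorm (κ : ℕ) (g : ℝ → ℝ) : ℝ :=
  ⨆ p : Fin (κ + 1) × ℝ, |iteratedDeriv (p.1 : ℕ) g p.2|

/-- Poincaré-type step: a function with mean zero over every window of length `p`
is bounded by `p` times a bound on its derivative. -/
lemma poincare_step {h h' : ℝ → ℝ} {p B : ℝ} (hp : 0 < p)
    (hd : ∀ x, HasDerivAt h (h' x) x) (hc : Continuous h')
    (hB : ∀ x, |h' x| ≤ B)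
    (hm : ∀ t, (∫ s in t..(t + p), h s) = 0) (t : ℝ) : |h t| ≤ p * B := by
  have hhc : Continuous h := by
    rw [continuous_iff_continuousAt]; exact fun x => (hd x).continuousAt
  have hB0 : 0 ≤ B := le_trans (abs_nonneg _) (hB 0)
  have key : ∀ s ∈ Set.uIoc t (t + p), ‖h t - h s‖ ≤ B * p := by
    intro s hs
    have h1 : (∫ u in s..t, h' u) = h t - h s :=
      intervalIntegral.integral_eq_sub_of_hasDerivAt (fun x _ => hd x)
        (hc.intervalIntegrable _ _)
    have h2 : ‖∫ u in s..t, h' u‖ ≤ B * |t - s| :=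
      intervalIntegral.norm_integral_le_of_norm_le_const (fun x _ => hB x)
    rw [h1] at h2
    refine h2.trans (mul_le_mul_of_nonneg_left ?_ hB0)
    rw [Set.uIoc_of_le (by linarith)] at hs
    rw [abs_le]
    constructor <;> [linarith [hs.1, hs.2]; linarith [hs.1, hs.2]]
  have h3 : p * h t = ∫ s in t..(t + p), (h t - h s) := by
    rw [intervalIntegral.integral_sub intervalIntegrable_const
      (hhc.intervalIntegrable _ _), hm t, intervalIntegral.integral_const]
    simp
  have h4 : ‖∫ s in t..(t + p), (h t - h s)‖ ≤ B * p * |t + p - t| :=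
    intervalIntegral.norm_integral_le_of_norm_le_const key
  rw [← h3] at h4
  have habs : |t + p - t| = p := by
    rw [add_sub_cancel_left, abs_of_pos hp]
  rw [habs, Real.norm_eq_abs, abs_mul, abs_of_pos hp] at h4
  nlinarith [abs_nonneg (h t)]

lemma periodic_iteratedDeriv {g : ℝ → ℝ} {L : ℝ} (hg : Function.Periodic g L) :
    ∀ m : ℕ, Function.Periodic (iteratedDeriv m g) L := by
  intro m
  induction m with
  | zero => simpa using hg
  | succ n ih =>
    intro x
    rw [iteratedDeriv_succ]
    have hfun : (fun y => iteratedDeriv n g (y + L)) = iteratedDeriv n g := funext ih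
    calc deriv (iteratedDeriv n g) (x + L)
        = deriv (fun y => iteratedDeriv n g (y + L)) x := (deriv_comp_add_const _ _ _).symm
      _ = deriv (iteratedDeriv n g) x := by rw [hfun]

lemma cnorm_bddAbove {κ : ℕ} {g : ℝ → ℝ} {L : ℝ} (hL : 0 < L)
    (hg : ContDiff ℝ (κ : ℕ∞) g) (hper : Function.Periodic g L) :
    BddAbove (Set.range fun q : Fin (κ + 1) × ℝ => |iteratedDeriv (q.1 : ℕ) g q.2|) := by
  have hb : ∀ m : Fin (κ + 1), ∃ B : ℝ, ∀ x : ℝ, |iteratedDeriv (m : ℕ) g x| ≤ B := by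
    intro m
    have hcont : Continuous (iteratedDeriv (m : ℕ) g) :=
      hg.continuous_iteratedDeriv _ (by exact_mod_cast Nat.lt_succ_iff.mp m.isLt)
    obtain ⟨B, hB⟩ := (isCompact_Icc (a := (0:ℝ)) (b := L)).exists_bound_of_continuousOn
      hcont.continuousOn
    refine ⟨B, fun x => ?_⟩
    obtain ⟨y, hy, hxy⟩ := (periodic_iteratedDeriv hper (m : ℕ)).exists_mem_Ico₀ hL x
    rw [hxy]
    simpa using hB y ⟨hy.1, hy.2.le⟩
  choose Bf hBf using hb
  refine ⟨Finset.univ.sup' Finset.univ_nonempty Bf, ?_⟩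
  rintro r ⟨⟨m, x⟩, rfl⟩
  exact le_trans (hBf m x) (Finset.le_sup' Bf (Finset.mem_univ m))

lemma le_cnorm {κ : ℕ} {g : ℝ → ℝ} {L : ℝ} (hL : 0 < L)
    (hg : ContDiff ℝ (κ : ℕ∞) g) (hper : Function.Periodic g L)
    {m : ℕ} (hm : m ≤ κ) (x : ℝ) : |iteratedDeriv m g x| ≤ Cnorm κ g := by
  have := le_ciSup (cnorm_bddAbove hL hg hper)
    ((⟨⟨m, Nat.lt_succ_of_le hm⟩, x⟩ : Fin (κ + 1) × ℝ))
  simpa [Cnorm] using this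

lemma abs_sub_le_cnorm {κ : ℕ} {g : ℝ → ℝ} {L : ℝ} (hL : 0 < L) (hκ : 1 ≤ κ)
    (hg : ContDiff ℝ (κ : ℕ∞) g) (hper : Function.Periodic g L)
    (a b : ℝ) : |g a - g b| ≤ Cnorm κ g * |a - b| := by
  have hder : ∀ y : ℝ, HasDerivAt g (iteratedDeriv 1 g y) y := by
    intro y
    rw [iteratedDeriv_one]
    exact (hg.differentiable (by exact_mod_cast (show κ ≠ 0 by omega)) y).hasDerivAt
  have h1 : (∫ u in b..a, iteratedDeriv 1 g u) = g a - g b :=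
    intervalIntegral.integral_eq_sub_of_hasDerivAt (fun y _ => hder y)
      ((hg.continuous_iteratedDeriv 1 (by exact_mod_cast hκ)).intervalIntegrable _ _)
  have h2 : ‖∫ u in b..a, iteratedDeriv 1 g u‖ ≤ Cnorm κ g * |a - b| :=
    intervalIntegral.norm_integral_le_of_norm_le_const
      (fun y _ => le_cnorm hL hg hper hκ y)
  rw [h1, Real.norm_eq_abs] at h2
  exact h2

lemma sum_shift_integral {f Φ : ℝ → ℝ} (hΦ : ∀ y, HasDerivAt Φ (f y) y) (hf : Continuous f)
    {N : ℕ} {p t : ℝ} (x : ℕ → ℝ) (hxs : ∀ i, x (i + 1) = x i + p) :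
    (∑ i ∈ Finset.range N, ∫ s in t..(t + p), f (x i + s)) = Φ (x N + t) - Φ (x 0 + t) := by
  have hterm : ∀ i : ℕ,
      (∫ s in t..(t + p), f (x i + s)) = Φ (x (i + 1) + t) - Φ (x i + t) := by
    intro i
    rw [intervalIntegral.integral_comp_add_left (fun s => f s) (x i),
      intervalIntegral.integral_eq_sub_of_hasDerivAt (fun y _ => hΦ y)
        (hf.intervalIntegrable _ _),
      show x i + (t + p) = x (i + 1) + t by rw [hxs]; ring]
  calc (∑ i ∈ Finset.range N, ∫ s in t..(t + p), f (x i + s))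
      = ∑ i ∈ Finset.range N, (Φ (x (i + 1) + t) - Φ (x i + t)) := by
        exact Finset.sum_congr rfl fun i _ => hterm i
    _ = Φ (x N + t) - Φ (x 0 + t) := Finset.sum_range_sub (fun i => Φ (x i + t)) N

/-- Convergence rate of Riemann sums over an approximately uniform mesh for periodic
`C^κ` functions. -/
theorem riemann_perturbed_rate (L : ℝ) (hL : 0 < L) (κ : ℕ) (hκ : 2 ≤ κ) (M : ℝ) (hM : 0 < M) :
    ∃ C > 0, ∀ N : ℕ, 2 ≤ N → ∀ st : Fin N → ℝ,
      (∀ i : Fin N, st i ∈ Set.Ico (0:ℝ) L ∧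
        |st i - (((i : ℕ) : ℝ) + 1/2) * L / (N : ℝ)| ≤ M / (N : ℝ) ^ κ) →
      ∀ g : ℝ → ℝ, ContDiff ℝ (κ : ℕ∞) g → (∀ x, g (x + L) = g x) →
        |(∫ s in (0:ℝ)..L, g s) - (L / (N : ℝ)) * ∑ i, g (st i)| ≤
          C / (N : ℝ) ^ κ * Cnorm κ g := by
  refine ⟨L ^ (κ + 1) + L * M, by positivity, ?_⟩
  intro N hN st hst g hg hper'
  have hper : Function.Periodic g L := hper'
  have hCg0 : 0 ≤ Cnorm κ g :=
    (abs_nonneg _).trans (le_cnorm hL hg hper (Nat.zero_le κ) 0)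
  have hN0 : (0:ℝ) < (N : ℝ) := by
    have : 0 < N := by omega
    exact_mod_cast this
  set Cg := Cnorm κ g with hCgdef
  set p : ℝ := L / (N : ℝ) with hpdef
  have hp : 0 < p := div_pos hL hN0
  set x : ℕ → ℝ := fun i => ((i : ℝ) + 1/2) * L / (N : ℝ) with hxdef
  have hxsucc : ∀ i : ℕ, x (i + 1) = x i + p := by
    intro i
    simp only [hxdef, hpdef]
    push_cast
    field_simp
    ring
  have hxN : x N = x 0 + L := by
    simp only [hxdef]
    field_simp
    ring
  set I : ℝ := ∫ s in (0:ℝ)..L, g s with hIdef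
  set h : ℕ → ℝ → ℝ := fun m t =>
    (L / (N : ℝ)) * ∑ i ∈ Finset.range N, iteratedDeriv m g (x i + t)
      - (if m = 0 then I else 0) with hhdef
  -- casts
  have hcastle : ∀ {m : ℕ}, m ≤ κ → ((m : ℕ∞) : WithTop ℕ∞) ≤ ((κ : ℕ∞) : WithTop ℕ∞) := by
    intro m hm; exact_mod_cast hm
  have hcastlt : ∀ {m : ℕ}, m < κ → ((m : ℕ∞) : WithTop ℕ∞) < ((κ : ℕ∞) : WithTop ℕ∞) := by
    intro m hm; exact_mod_cast hm
  -- continuity of h m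
  have hcont : ∀ m : ℕ, m ≤ κ → Continuous (h m) := by
    intro m hm
    apply Continuous.sub _ continuous_const
    apply continuous_const.mul
    apply continuous_finset_sum
    intro i _
    exact (hg.continuous_iteratedDeriv m (hcastle hm)).comp (continuous_const.add continuous_id)
  -- pointwise derivative of iterated derivatives
  have hID : ∀ m : ℕ, m < κ → ∀ y : ℝ, HasDerivAt (iteratedDeriv m g) (iteratedDeriv (m + 1) g y) y := by
    intro m hm y
    rw [iteratedDeriv_succ]
    exact ((hg.differentiable_iteratedDeriv m (hcastlt hm)) y).hasDerivAt
  -- derivative of h m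
  have hder : ∀ m : ℕ, m < κ → ∀ t : ℝ, HasDerivAt (h m) (h (m + 1) t) t := by
    intro m hm t
    have hsum : HasDerivAt (fun t => ∑ i ∈ Finset.range N, iteratedDeriv m g (x i + t))
        (∑ i ∈ Finset.range N, iteratedDeriv (m + 1) g (x i + t)) t := by
      apply HasDerivAt.fun_sum
      intro i _
      have := (hID m hm (x i + t)).comp t ((hasDerivAt_id t).const_add (x i))
      simpa [Function.comp_def] using this
    have := (hsum.const_mul (L / (N : ℝ))).sub_const (if m = 0 then I else 0)
    simpa [hhdef, Nat.succ_ne_zero] using this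
  -- mean zero over every period window
  have hmean : ∀ m : ℕ, m ≤ κ → ∀ t : ℝ, (∫ s in t..(t + p), h m s) = 0 := by
    intro m hm t
    have hfc : Continuous (iteratedDeriv m g) := hg.continuous_iteratedDeriv m (hcastle hm)
    obtain ⟨Φ, hΦd, hΦper⟩ :
        ∃ Φ : ℝ → ℝ, (∀ y, HasDerivAt Φ (iteratedDeriv m g y) y) ∧
          (Φ (x 0 + t + L) - Φ (x 0 + t) = if m = 0 then I else 0) := by
      match m with
      | 0 =>
        refine ⟨fun u => ∫ s in (0:ℝ)..u, g s, fun y => ?_, ?_⟩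
        · rw [iteratedDeriv_zero]
          exact intervalIntegral.integral_hasDerivAt_right (hg.continuous.intervalIntegrable _ _)
            (hg.continuous.stronglyMeasurableAtFilter _ _) hg.continuous.continuousAt
        · have hadj : (∫ s in (0:ℝ)..(x 0 + t), g s) + (∫ s in (x 0 + t)..(x 0 + t + L), g s)
              = ∫ s in (0:ℝ)..(x 0 + t + L), g s :=
            intervalIntegral.integral_add_adjacent_intervals
              (hg.continuous.intervalIntegrable _ _) (hg.continuous.intervalIntegrable _ _)
          have hper2 : (∫ s in (x 0 + t)..(x 0 + t + L), g s) = ∫ s in (0:ℝ)..(0 + L), g s :=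
            hper.intervalIntegral_add_eq (x 0 + t) 0
          simp only [if_pos rfl, hIdef]
          rw [← hadj, hper2]
          simp
      | k + 1 =>
        refine ⟨iteratedDeriv k g, hID k (by omega), ?_⟩
        rw [if_neg (Nat.succ_ne_zero k)]
        have := periodic_iteratedDeriv hper k (x 0 + t)
        rw [this]
        ring
    have hsum := sum_shift_integral hΦd hfc (N := N) (p := p) (t := t) x hxsucc
    have hik : ∀ i ∈ Finset.range N,
        IntervalIntegrable (fun s => iteratedDeriv m g (x i + s)) volume t (t + p) :=
      fun i _ => ((hfc.comp (continuous_const.add continuous_id)).intervalIntegrable _ _)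
    have hic : Continuous (fun s => (L / (N : ℝ)) *
        ∑ i ∈ Finset.range N, iteratedDeriv m g (x i + s)) := by
      apply continuous_const.mul
      apply continuous_finset_sum
      intro i _
      exact hfc.comp (continuous_const.add continuous_id)
    calc (∫ s in t..(t + p), h m s)
        = (∫ s in t..(t + p), ((L / (N : ℝ)) *
            ∑ i ∈ Finset.range N, iteratedDeriv m g (x i + s)))
          - ∫ s in t..(t + p), (if m = 0 then I else 0) := by
          rw [← intervalIntegral.integral_sub (hic.intervalIntegrable _ _)
            intervalIntegrable_const]
      _ = (L / (N : ℝ)) * (∑ i ∈ Finset.range N, ∫ s in t..(t + p), iteratedDeriv m g (x i + s))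
          - (if m = 0 then I else 0) * p := by
          rw [intervalIntegral.integral_const_mul, intervalIntegral.integral_finset_sum hik,
            intervalIntegral.integral_const]
          simp only [smul_eq_mul, add_sub_cancel_left]
          ring
      _ = (L / (N : ℝ)) * (Φ (x 0 + t + L) - Φ (x 0 + t)) - (if m = 0 then I else 0) * p := by
          rw [hsum, hxN, show x 0 + L + t = x 0 + t + L by ring]
      _ = 0 := by
          rw [hΦper, hpdef]
          split <;> ring
  -- base bound
  have hbase : ∀ t : ℝ, |h κ t| ≤ L * Cg := by
    intro t
    have hκ0 : κ ≠ 0 := by omega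
    have h1 : h κ t = (L / (N : ℝ)) * ∑ i ∈ Finset.range N, iteratedDeriv κ g (x i + t) := by
      simp [hhdef, hκ0]
    rw [h1, abs_mul, abs_of_pos (div_pos hL hN0)]
    have h2 : |∑ i ∈ Finset.range N, iteratedDeriv κ g (x i + t)| ≤ (N : ℝ) * Cg := by
      refine (Finset.abs_sum_le_sum_abs _ _).trans ?_
      have : ∀ i ∈ Finset.range N, |iteratedDeriv κ g (x i + t)| ≤ Cg :=
        fun i _ => le_cnorm hL hg hper le_rfl _
      calc ∑ i ∈ Finset.range N, |iteratedDeriv κ g (x i + t)|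
          ≤ ∑ _i ∈ Finset.range N, Cg := Finset.sum_le_sum this
        _ = (N : ℝ) * Cg := by simp [mul_comm]
    calc L / (N : ℝ) * |∑ i ∈ Finset.range N, iteratedDeriv κ g (x i + t)|
        ≤ L / (N : ℝ) * ((N : ℝ) * Cg) :=
          mul_le_mul_of_nonneg_left h2 (le_of_lt (div_pos hL hN0))
      _ = L * Cg := by field_simp
  -- downward induction
  have hind : ∀ j : ℕ, j ≤ κ → ∀ t : ℝ, |h (κ - j) t| ≤ p ^ j * (L * Cg) := by
    intro j
    induction j with
    | zero => intro _ t; simpa using hbase t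
    | succ n ih =>
      intro hn t
      have hn' : n ≤ κ := by omega
      have hlt : κ - (n + 1) < κ := by omega
      have heq : κ - (n + 1) + 1 = κ - n := by omega
      have hd : ∀ s : ℝ, HasDerivAt (h (κ - (n + 1))) (h (κ - n) s) s := by
        intro s
        have := hder (κ - (n + 1)) hlt s
        rwa [heq] at this
      have := poincare_step hp hd (hcont (κ - n) (by omega)) (ih hn')
        (hmean (κ - (n + 1)) (by omega)) t
      calc |h (κ - (n + 1)) t| ≤ p * (p ^ n * (L * Cg)) := this
        _ = p ^ (n + 1) * (L * Cg) := by ring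
  -- conclude: midpoint rule bound
  have hmid : |I - (L / (N : ℝ)) * ∑ i ∈ Finset.range N, g (x i)| ≤ p ^ κ * (L * Cg) := by
    have := hind κ le_rfl 0
    simp only [Nat.sub_self] at this
    have h00 : h 0 0 = (L / (N : ℝ)) * (∑ i ∈ Finset.range N, g (x i)) - I := by
      simp [hhdef]
    rw [h00] at this
    rwa [abs_sub_comm] at this
  -- perturbation bound
  have hpert : |∑ i ∈ Finset.range N, g (x i) - ∑ i : Fin N, g (st i)|
      ≤ (N : ℝ) * (Cg * (M / (N : ℝ) ^ κ)) := by
    rw [← Fin.sum_univ_eq_sum_range (fun i => g (x i)) N, ← Finset.sum_sub_distrib]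
    refine (Finset.abs_sum_le_sum_abs _ _).trans ?_
    have hterm : ∀ i : Fin N, |g (x (i : ℕ)) - g (st i)| ≤ Cg * (M / (N : ℝ) ^ κ) := by
      intro i
      refine (abs_sub_le_cnorm hL (by omega) hg hper _ _).trans ?_
      apply mul_le_mul_of_nonneg_left _ hCg0
      rw [abs_sub_comm]
      exact (hst i).2
    calc ∑ i : Fin N, |g (x (i : ℕ)) - g (st i)|
        ≤ ∑ _i : Fin N, Cg * (M / (N : ℝ) ^ κ) :=
          Finset.sum_le_sum fun i _ => hterm i
      _ = (N : ℝ) * (Cg * (M / (N : ℝ) ^ κ)) := by simp [mul_comm]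
  -- assemble
  have hNκ : (0:ℝ) < (N : ℝ) ^ κ := by positivity
  calc |I - (L / (N : ℝ)) * ∑ i : Fin N, g (st i)|
      = |(I - (L / (N : ℝ)) * ∑ i ∈ Finset.range N, g (x i))
          + (L / (N : ℝ)) * (∑ i ∈ Finset.range N, g (x i) - ∑ i : Fin N, g (st i))| := by
        congr 1
        ring
    _ ≤ |I - (L / (N : ℝ)) * ∑ i ∈ Finset.range N, g (x i)|
          + |(L / (N : ℝ))| * |∑ i ∈ Finset.range N, g (x i) - ∑ i : Fin N, g (st i)| := by
        rw [← abs_mul]; exact abs_add_le _ _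
    _ ≤ p ^ κ * (L * Cg)
          + (L / (N : ℝ)) * ((N : ℝ) * (Cg * (M / (N : ℝ) ^ κ))) := by
        rw [abs_of_pos (div_pos hL hN0)]
        exact add_le_add hmid
          (mul_le_mul_of_nonneg_left hpert (le_of_lt (div_pos hL hN0)))
    _ = (L ^ (κ + 1) + L * M) / (N : ℝ) ^ κ * Cg := by
        rw [hpdef, div_pow]
        field_simp
        ring
end

section
/- Let L > 0, let κ ≥ 2 be an integer and let M > 0. There exist C > 0 and N₀ such that for every integer N ≥ N₀ and all points s₁, …, s_N ∈ [0, L) and s̃₁, …, s̃_N ∈ [0, L) satisfying |s_i − (i − 1)·L/N| ≤ M·N^{−(κ+1)} and |s̃_i − (i − 1/2)·L/N| ≤ M·N^{−(κ+1)} for all 1 ≤ i ≤ N, one has max_{1≤i≤N} |Σ_{j=1}^{N} cot((s̃_i − s_j)·π/L)| ≤ C·N^{1−κ} and max_{1≤i≤N} |Σ_{j=1}^{N} cot((s̃_j − s_i)·π/L)| ≤ C·N^{1−κ}. -/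
open Real

private lemma cot_pi_sub' (x : ℝ) : Real.cot (π - x) = -Real.cot x := by
  rw [Real.cot_eq_cos_div_sin, Real.cot_eq_cos_div_sin, Real.cos_pi_sub, Real.sin_pi_sub, neg_div]

private lemma cot_add_int_mul_pi' (x : ℝ) (n : ℤ) : Real.cot (x + n * π) = Real.cot x := by
  rw [Real.cot_eq_cos_div_sin, Real.cot_eq_cos_div_sin, Real.sin_add_int_mul_pi,
    Real.cos_add_int_mul_pi]
  have h : ((-1 : ℝ)) ^ n ≠ 0 := zpow_ne_zero n (by norm_num)
  rw [mul_div_mul_left _ _ h]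

private lemma abs_neg_one_zpow' (k : ℤ) : |(-1:ℝ)^k| = 1 := by
  rcases Int.even_or_odd k with h|h
  · rw [h.neg_one_zpow]; norm_num
  · rw [h.neg_one_zpow]; norm_num

private lemma abs_sin_sub_sin_le' (a b : ℝ) : |Real.sin a - Real.sin b| ≤ |a - b| := by
  rw [Real.sin_sub_sin]
  calc |2 * Real.sin ((a-b)/2) * Real.cos ((a+b)/2)|
      = 2 * |Real.sin ((a-b)/2)| * |Real.cos ((a+b)/2)| := by
        rw [abs_mul, abs_mul]; norm_num
    _ ≤ 2 * |(a-b)/2| * 1 := by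
        apply mul_le_mul (by
          have := Real.abs_sin_le_abs (x := (a-b)/2)
          nlinarith [abs_nonneg (Real.sin ((a-b)/2))]) (Real.abs_cos_le_one _)
          (abs_nonneg _) (by positivity)
    _ = |a - b| := by rw [abs_div, abs_of_nonneg (by norm_num : (0:ℝ) ≤ 2)]; ring

private lemma sum_inv_sq_odd (n : ℕ) :
    ∑ d ∈ Finset.range n, (1:ℝ)/(2*(d:ℝ)+1)^2 ≤ 2 - 2/((n:ℝ)+1) := by
  induction n with
  | zero => simp
  | succ n ih =>
    rw [Finset.sum_range_succ]
    have hn : (0:ℝ) < (n:ℝ) + 1 := by positivity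
    have hn2 : (0:ℝ) < (n:ℝ) + 2 := by positivity
    have h1 : (1:ℝ)/(2*(n:ℝ)+1)^2 ≤ 2/((n:ℝ)+1) - 2/((n:ℝ)+2) := by
      rw [div_sub_div _ _ (ne_of_gt hn) (ne_of_gt hn2),
        div_le_div_iff₀ (by positivity) (by positivity)]
      nlinarith [sq_nonneg (n:ℝ)]
    push_cast
    have h2 : ((n:ℝ) + 1 + 1) = (n:ℝ) + 2 := by ring
    rw [h2]
    linarith

private lemma cot_sum_exact (N : ℕ) :
    ∑ d : Fin N, Real.cot ((((d:ℕ):ℝ)+1/2)*π/N) = 0 := by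
  rcases Nat.eq_zero_or_pos N with h|h
  · subst h; simp
  have hNR : (0:ℝ) < N := by exact_mod_cast h
  set f : Fin N → ℝ := fun d => Real.cot ((((d:ℕ):ℝ)+1/2)*π/N) with hf
  have key : ∀ d : Fin N, f (Fin.revPerm d) = - f d := by
    intro d
    have hd : (d:ℕ) + 1 ≤ N := d.isLt
    have hval : ((Fin.rev d : Fin N) : ℕ) = N - ((d:ℕ)+1) := Fin.val_rev d
    have hcast : (((N - ((d:ℕ)+1) : ℕ)) : ℝ) = (N:ℝ) - ((d:ℕ):ℝ) - 1 := by
      push_cast [Nat.cast_sub hd]; ring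
    have harg : ((((Fin.rev d : Fin N):ℕ):ℝ)+1/2)*π/N = π - ((((d:ℕ):ℝ))+1/2)*π/N := by
      rw [hval, hcast]; field_simp; ring
    show f (Fin.rev d) = - f d
    rw [hf]
    simp only []
    rw [harg, cot_pi_sub']
  have h2 : ∑ d, f d = - ∑ d, f d := by
    conv_lhs => rw [← Equiv.sum_comp Fin.revPerm f]
    rw [← Finset.sum_neg_distrib]
    exact Finset.sum_congr rfl (fun d _ => key d)
  linarith

private lemma cot_sum_master (N : ℕ) (hN : 0 < N) (x : Fin N → ℝ) (σ : Equiv.Perm (Fin N))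
    (k : Fin N → ℤ) (ε : ℝ) (hε : 0 ≤ ε) (hε2 : ε ≤ 1/(2*(N:ℝ)))
    (hx : ∀ j, |x j - (((((σ j : Fin N) : ℕ) : ℝ) + 1/2) * π / N + (k j) * π)| ≤ ε) :
    |∑ j, Real.cot (x j)| ≤ 8 * ε * (N:ℝ)^2 := by
  have hNR : (0:ℝ) < N := by exact_mod_cast hN
  set u : Fin N → ℝ := fun j => ((((σ j : Fin N) : ℕ):ℝ)+1/2)*π/N with hu
  have sum_u : ∑ j, Real.cot (u j) = 0 := by
    have h := Equiv.sum_comp σ (fun d : Fin N => Real.cot ((((d:ℕ):ℝ)+1/2)*π/N))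
    rw [hu]
    simp only []
    rw [h, cot_sum_exact N]
  have key : ∀ j : Fin N, |Real.cot (x j) - Real.cot (u j)| ≤
      2*ε*(N:ℝ)^2 / (2*((min ((σ j : Fin N):ℕ) (N - 1 - ((σ j : Fin N):ℕ)) : ℕ):ℝ)+1)^2 := by
    intro j
    set d : ℕ := ((σ j : Fin N):ℕ) with hd
    have hdN : d < N := (σ j).isLt
    set m : ℕ := min d (N - 1 - d) with hm
    have hm1 : 2*m + 1 ≤ N := by omega
    have hmR : 2*(m:ℝ)+1 ≤ (N:ℝ) := by
      have : ((2*m+1 : ℕ):ℝ) ≤ (N:ℝ) := by exact_mod_cast hm1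
      push_cast at this; linarith
    have hsin_u : Real.sin (u j) = Real.sin (((m:ℝ)+1/2)*π/N) := by
      rcases le_or_gt d (N - 1 - d) with hc|hc
      · rw [hu]
        simp only []
        rw [← hd, hm, min_eq_left hc]
      · have hmd : m = N - 1 - d := by rw [hm, min_eq_right hc.le]
        have hcast : ((N - 1 - d : ℕ):ℝ) = (N:ℝ) - 1 - (d:ℝ) := by
          have h1 : (1:ℕ) ≤ N := by omega
          have h2 : d ≤ N - 1 := by omega
          push_cast [Nat.cast_sub h2, Nat.cast_sub h1]; ring
        have harg : (((m:ℕ):ℝ)+1/2)*π/N = π - (((d:ℕ):ℝ)+1/2)*π/N := by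
          rw [hmd, hcast]; field_simp; ring
        rw [hu]
        simp only []
        rw [← hd, harg, Real.sin_pi_sub]
    have hsin_exact : (2*(m:ℝ)+1)/(N:ℝ) ≤ Real.sin (((m:ℝ)+1/2)*π/N) := by
      have harg1 : (0:ℝ) ≤ ((m:ℝ)+1/2)*π/N := by positivity
      have harg2 : ((m:ℝ)+1/2)*π/N ≤ π/2 := by
        rw [div_le_div_iff₀ hNR (by norm_num : (0:ℝ) < 2)]
        nlinarith [Real.pi_pos]
      have h := Real.mul_le_sin harg1 harg2
      calc (2*(m:ℝ)+1)/(N:ℝ) = 2/π * (((m:ℝ)+1/2)*π/N) := by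
            field_simp
        _ ≤ _ := h
    have hfrac_pos : (0:ℝ) < (2*(m:ℝ)+1)/(N:ℝ) := by positivity
    have hsinu_pos : 0 < Real.sin (u j) := by rw [hsin_u]; linarith
    set u' : ℝ := u j + (k j) * π with hu'
    have habs_u' : |Real.sin u'| = Real.sin (u j) := by
      rw [hu', Real.sin_add_int_mul_pi, abs_mul, abs_neg_one_zpow', one_mul,
        abs_of_pos hsinu_pos]
    have hxu' : |x j - u'| ≤ ε := hx j
    have hsinx : (2*(m:ℝ)+1)/(2*(N:ℝ)) ≤ |Real.sin (x j)| := by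
      have h1 : |Real.sin (x j) - Real.sin u'| ≤ ε :=
        le_trans (abs_sin_sub_sin_le' _ _) hxu'
      have h2 : |Real.sin u'| - |Real.sin (x j)| ≤ ε := by
        have h3 := abs_sub_abs_le_abs_sub (Real.sin u') (Real.sin (x j))
        rw [abs_sub_comm] at h1; linarith
      have h3 : (2*(m:ℝ)+1)/(N:ℝ) ≤ |Real.sin u'| := by
        rw [habs_u', hsin_u]; exact hsin_exact
      have h4 : ε ≤ (2*(m:ℝ)+1)/(2*(N:ℝ)) := by
        apply le_trans hε2
        have hm0 : (0:ℝ) ≤ (m:ℝ) := Nat.cast_nonneg m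
        gcongr
        linarith
      have h5 : (2*(m:ℝ)+1)/(N:ℝ) - (2*(m:ℝ)+1)/(2*(N:ℝ)) = (2*(m:ℝ)+1)/(2*(N:ℝ)) := by
        ring
      linarith
    have hsinx_pos : (0:ℝ) < |Real.sin (x j)| := by
      have : (0:ℝ) < (2*(m:ℝ)+1)/(2*(N:ℝ)) := by positivity
      linarith
    have hsinx_ne : Real.sin (x j) ≠ 0 := by
      intro h; rw [h, abs_zero] at hsinx_pos; exact lt_irrefl _ hsinx_pos
    have hsinu'_ne : Real.sin u' ≠ 0 := by
      intro h; rw [h, abs_zero] at habs_u'; linarith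
    have hiden : Real.cot (x j) - Real.cot u' =
        Real.sin (u' - x j) / (Real.sin (x j) * Real.sin u') := by
      rw [Real.cot_eq_cos_div_sin, Real.cot_eq_cos_div_sin, Real.sin_sub]
      field_simp
    have hcotu' : Real.cot u' = Real.cot (u j) := cot_add_int_mul_pi' _ _
    rw [← hcotu', hiden, abs_div, abs_mul]
    have hnum : |Real.sin (u' - x j)| ≤ ε := by
      apply le_trans Real.abs_sin_le_abs
      rw [abs_sub_comm]; exact hxu'
    have hsinu'_lb : (2*(m:ℝ)+1)/(N:ℝ) ≤ |Real.sin u'| := by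
      rw [habs_u', hsin_u]; exact hsin_exact
    have hden : (2*(m:ℝ)+1)/(2*(N:ℝ)) * ((2*(m:ℝ)+1)/(N:ℝ)) ≤
        |Real.sin (x j)| * |Real.sin u'| :=
      mul_le_mul hsinx hsinu'_lb (by positivity) (abs_nonneg _)
    have hden_pos : (0:ℝ) < (2*(m:ℝ)+1)/(2*(N:ℝ)) * ((2*(m:ℝ)+1)/(N:ℝ)) := by positivity
    calc |Real.sin (u' - x j)| / (|Real.sin (x j)| * |Real.sin u'|)
        ≤ ε / ((2*(m:ℝ)+1)/(2*(N:ℝ)) * ((2*(m:ℝ)+1)/(N:ℝ))) :=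
          div_le_div₀ hε hnum hden_pos hden
      _ = 2*ε*(N:ℝ)^2 / (2*(m:ℝ)+1)^2 := by
          field_simp
  -- total bound
  set g : ℕ → ℝ := fun t => 1/(2*(t:ℝ)+1)^2 with hg
  have hg_nonneg : ∀ t, 0 ≤ g t := fun t => by rw [hg]; positivity
  have step1 : |∑ j, Real.cot (x j)| ≤
      ∑ j, 2*ε*(N:ℝ)^2 * g (min ((σ j : Fin N):ℕ) (N - 1 - ((σ j : Fin N):ℕ))) := by
    calc |∑ j, Real.cot (x j)| = |∑ j, (Real.cot (x j) - Real.cot (u j))| := by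
          rw [Finset.sum_sub_distrib, sum_u, sub_zero]
      _ ≤ ∑ j, |Real.cot (x j) - Real.cot (u j)| := Finset.abs_sum_le_sum_abs _ _
      _ ≤ _ := by
          apply Finset.sum_le_sum
          intro j _
          have := key j
          rw [hg]
          simp only []
          calc |Real.cot (x j) - Real.cot (u j)| ≤ _ := this
            _ = _ := by rw [div_eq_mul_one_div]
  have step2 : ∀ t : ℕ, g (min t (N - 1 - t)) ≤ g t + g (N - 1 - t) := by
    intro t
    rcases le_or_gt t (N - 1 - t) with hc|hc
    · rw [min_eq_left hc]; linarith [hg_nonneg (N - 1 - t)]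
    · rw [min_eq_right hc.le]; linarith [hg_nonneg t]
  have step3 : ∑ j, g (min ((σ j : Fin N):ℕ) (N - 1 - ((σ j : Fin N):ℕ))) ≤ 4 := by
    have hcomp := Equiv.sum_comp σ
      (fun dd : Fin N => g (min (dd:ℕ) (N - 1 - (dd:ℕ))))
    calc ∑ j, g (min ((σ j : Fin N):ℕ) (N - 1 - ((σ j : Fin N):ℕ)))
        = ∑ dd : Fin N, g (min (dd:ℕ) (N - 1 - (dd:ℕ))) := hcomp
      _ ≤ ∑ dd : Fin N, (g (dd:ℕ) + g (N - 1 - (dd:ℕ))) :=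
          Finset.sum_le_sum (fun dd _ => step2 _)
      _ = ∑ dd : Fin N, g (dd:ℕ) + ∑ dd : Fin N, g (N - 1 - (dd:ℕ)) :=
          Finset.sum_add_distrib
      _ = ∑ dd : Fin N, g (dd:ℕ) + ∑ dd : Fin N, g (dd:ℕ) := by
          congr 1
          have hrev := Equiv.sum_comp Fin.revPerm (fun dd : Fin N => g (N - 1 - (dd:ℕ)))
          rw [← hrev]
          apply Finset.sum_congr rfl
          intro dd _
          congr 1
          have : ((Fin.revPerm dd : Fin N) : ℕ) = N - ((dd:ℕ)+1) := Fin.val_rev dd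
          rw [this]
          omega
      _ ≤ 2 + 2 := by
          have hsum : ∑ dd : Fin N, g (dd:ℕ) ≤ 2 := by
            rw [Fin.sum_univ_eq_sum_range g N]
            have := sum_inv_sq_odd N
            have h0 : (0:ℝ) < (N:ℝ) + 1 := by positivity
            have h1 : 0 ≤ 2/((N:ℝ)+1) := by positivity
            rw [hg]
            simp only []
            linarith
          linarith
      _ = 4 := by norm_num
  calc |∑ j, Real.cot (x j)|
      ≤ ∑ j, 2*ε*(N:ℝ)^2 * g (min ((σ j : Fin N):ℕ) (N - 1 - ((σ j : Fin N):ℕ))) := step1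
    _ = 2*ε*(N:ℝ)^2 * ∑ j, g (min ((σ j : Fin N):ℕ) (N - 1 - ((σ j : Fin N):ℕ))) := by
        rw [Finset.mul_sum]
    _ ≤ 2*ε*(N:ℝ)^2 * 4 := by
        apply mul_le_mul_of_nonneg_left step3 (by positivity)
    _ = 8 * ε * (N:ℝ)^2 := by ring

private lemma fin_sub_decomp (N : ℕ) (hN : 0 < N) (a b : Fin N) :
    ∃ k : ℤ, ((a:ℕ):ℝ) - ((b:ℕ):ℝ) = (((a - b : Fin N):ℕ):ℝ) + (N:ℝ) * k := by
  have hb : (b:ℕ) < N := b.isLt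
  have hint : ∃ k : ℤ, ((a:ℕ):ℤ) - ((b:ℕ):ℤ) = (((a-b : Fin N):ℕ):ℤ) + (N:ℤ) * k := by
    refine ⟨(((N:ℤ) - ((b:ℕ):ℤ) + ((a:ℕ):ℤ)) / (N:ℤ)) - 1, ?_⟩
    have hsub : ((a - b : Fin N) : ℕ) = (N - (b:ℕ) + (a:ℕ)) % N := by rw [Fin.sub_def]
    have h2 : (((N - (b:ℕ) + (a:ℕ)) % N : ℕ) : ℤ) =
        ((N:ℤ) - ((b:ℕ):ℤ) + ((a:ℕ):ℤ)) % (N:ℤ) := by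
      rw [Int.natCast_mod]
      congr 1
      push_cast [Nat.cast_sub hb.le]
      ring
    rw [hsub, h2]
    linear_combination -Int.mul_ediv_add_emod ((N:ℤ) - ((b:ℕ):ℤ) + ((a:ℕ):ℤ)) (N:ℤ)
  obtain ⟨k, hk⟩ := hint
  exact ⟨k, by exact_mod_cast hk⟩

private lemma cot_sum_final (L : ℝ) (hL : 0 < L) (κ : ℕ) (hκ : 2 ≤ κ) (M : ℝ) (hM : 0 < M)
    (N : ℕ) (hN : 0 < N) (hNbig : 4*π*M/L ≤ (N:ℝ)^κ)
    (x : Fin N → ℝ) (a b : Fin N → Fin N)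
    (hbij : Function.Bijective (fun j => a j - b j))
    (hx : ∀ j, |x j - ((((a j : Fin N):ℕ):ℝ) - (((b j : Fin N):ℕ):ℝ) + 1/2) * π / N| ≤
      2*M/(N:ℝ)^(κ+1) * (π/L)) :
    |∑ j, Real.cot (x j)| ≤ (16*π*M/L) / (N:ℝ)^(κ-1) := by
  have hNR : (0:ℝ) < N := by exact_mod_cast hN
  have hπ := Real.pi_pos
  set ε : ℝ := 2*M/(N:ℝ)^(κ+1) * (π/L) with hε_def
  have hε : 0 ≤ ε := by positivity
  choose k hk using fun j => fin_sub_decomp N hN (a j) (b j)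
  set σ : Equiv.Perm (Fin N) := Equiv.ofBijective _ hbij with hσ
  have hε2 : ε ≤ 1/(2*(N:ℝ)) := by
    have hε_eq : ε = 2*M*π/(L*(N:ℝ)^(κ+1)) := by rw [hε_def]; field_simp
    rw [hε_eq, div_le_div_iff₀ (by positivity) (by positivity)]
    have h1 : 4*π*M ≤ L * (N:ℝ)^κ := by nlinarith [(div_le_iff₀ hL).mp hNbig]
    have h2 : (N:ℝ)^(κ+1) = (N:ℝ)^κ * N := pow_succ _ _
    calc 2*M*π * (2*(N:ℝ)) = (4*π*M) * N := by ring
      _ ≤ (L * (N:ℝ)^κ) * N := by nlinarith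
      _ = 1 * (L*(N:ℝ)^(κ+1)) := by rw [h2]; ring
  have hmaster := cot_sum_master N hN x σ k ε hε hε2 ?_
  · have hpow : (N:ℝ)^(κ+1) = (N:ℝ)^(κ-1) * (N:ℝ)^2 := by
      rw [← pow_add]
      congr 1
      omega
    have heq : 8 * ε * (N:ℝ)^2 = (16*π*M/L) / (N:ℝ)^(κ-1) := by
      rw [hε_def, hpow]
      have hp1 : (N:ℝ)^(κ-1) ≠ 0 := by positivity
      field_simp
      ring
    rw [← heq]
    exact hmaster
  · intro j
    have hσj : (σ j : Fin N) = a j - b j := rfl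
    have hkj := hk j
    have harg : ((((σ j : Fin N) : ℕ) : ℝ) + 1/2) * π / N + (k j) * π =
        ((((a j : Fin N):ℕ):ℝ) - (((b j : Fin N):ℕ):ℝ) + 1/2) * π / N := by
      rw [hσj]
      have : (((a j - b j : Fin N):ℕ):ℝ) = ((a j : ℕ):ℝ) - ((b j : ℕ):ℝ) - (N:ℝ) * (k j) := by
        linarith [hkj]
      rw [this]
      field_simp
      ring
    rw [harg]
    exact hx j


/-- Cotangent sums over a well distributed mesh vanish at rate `N^{1-κ}`. -/
theorem cot_sum_well_distributed (L : ℝ) (hL : 0 < L) (κ : ℕ) (hκ : 2 ≤ κ) (M : ℝ) (hM : 0 < M) :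
    ∃ C > 0, ∃ N₀ : ℕ, ∀ N : ℕ, N₀ ≤ N → ∀ s st : Fin N → ℝ,
      (∀ i : Fin N, s i ∈ Set.Ico (0:ℝ) L ∧
        |s i - ((i : ℕ) : ℝ) * L / (N : ℝ)| ≤ M / (N : ℝ) ^ (κ + 1)) →
      (∀ i : Fin N, st i ∈ Set.Ico (0:ℝ) L ∧
        |st i - (((i : ℕ) : ℝ) + 1/2) * L / (N : ℝ)| ≤ M / (N : ℝ) ^ (κ + 1)) →
      (∀ i : Fin N, |∑ j : Fin N, Real.cot ((st i - s j) * π / L)| ≤ C / (N : ℝ) ^ (κ - 1)) ∧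
      (∀ i : Fin N, |∑ j : Fin N, Real.cot ((st j - s i) * π / L)| ≤ C / (N : ℝ) ^ (κ - 1)) := by
  have hπ := Real.pi_pos
  refine ⟨16*π*M/L, by positivity, max 1 (⌈4*π*M/L⌉₊ + 1), ?_⟩
  intro N hN0 s st hs hst
  have hN : 0 < N := le_trans (le_max_left _ _) hN0
  haveI : NeZero N := ⟨hN.ne'⟩
  have hNR : (0:ℝ) < N := by exact_mod_cast hN
  have hNbig : 4*π*M/L ≤ (N:ℝ)^κ := by
    have h1 : (⌈4*π*M/L⌉₊ + 1 : ℕ) ≤ N := le_trans (le_max_right _ _) hN0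
    have h2 : 4*π*M/L ≤ (⌈4*π*M/L⌉₊ : ℝ) := Nat.le_ceil _
    have h3 : ((⌈4*π*M/L⌉₊ : ℕ):ℝ) + 1 ≤ (N:ℝ) := by exact_mod_cast h1
    have h4 : (N:ℝ) ≤ (N:ℝ)^κ := by
      calc (N:ℝ) = (N:ℝ)^1 := (pow_one _).symm
        _ ≤ (N:ℝ)^κ := pow_le_pow_right₀ (by exact_mod_cast hN) (by omega)
    linarith
  have hbound : ∀ (A B : ℝ), |A| ≤ M / (N:ℝ)^(κ+1) → |B| ≤ M / (N:ℝ)^(κ+1) →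
      |(A - B) * π / L| ≤ 2*M/(N:ℝ)^(κ+1) * (π/L) := by
    intro A B hA hB
    have h5 : |A - B| ≤ |A| + |B| := by
      rw [sub_eq_add_neg]
      refine le_trans (abs_add_le _ _) ?_
      rw [abs_neg]
    have h6 : |(A - B) * π / L| = |A - B| * (π/L) := by
      rw [mul_div_assoc, abs_mul, abs_of_pos (by positivity : (0:ℝ) < π/L)]
    rw [h6]
    have h7 : |A - B| ≤ 2*M/(N:ℝ)^(κ+1) := by
      have : |A| + |B| ≤ M/(N:ℝ)^(κ+1) + M/(N:ℝ)^(κ+1) := add_le_add hA hB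
      calc |A - B| ≤ |A| + |B| := h5
        _ ≤ M/(N:ℝ)^(κ+1) + M/(N:ℝ)^(κ+1) := this
        _ = 2*M/(N:ℝ)^(κ+1) := by ring
    exact mul_le_mul_of_nonneg_right h7 (by positivity)
  constructor
  · intro i
    apply cot_sum_final L hL κ hκ M hM N hN hNbig _ (fun _ => i) (fun j => j) ?_ ?_
    · exact (Finite.injective_iff_bijective).mp sub_right_injective
    · intro j
      obtain ⟨hs1, hs2⟩ := hs j
      obtain ⟨ht1, ht2⟩ := hst i
      have hident : (st i - s j) * π / L - (((i:ℕ):ℝ) - ((j:ℕ):ℝ) + 1/2) * π / N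
          = ((st i - ((((i:ℕ):ℝ)+1/2)*L/N)) - (s j - (((j:ℕ):ℝ)*L/N))) * π / L := by
        field_simp
        ring
      rw [hident]
      apply hbound _ _ ?_ ?_
      · have : (((i:ℕ):ℝ)+1/2)*L/N = (((i:ℕ):ℝ)+1/2)*L/N := rfl
        exact ht2
      · exact hs2
  · intro i
    apply cot_sum_final L hL κ hκ M hM N hN hNbig _ (fun j => j) (fun _ => i) ?_ ?_
    · exact (Finite.injective_iff_bijective).mp sub_left_injective
    · intro j
      obtain ⟨hs1, hs2⟩ := hs i
      obtain ⟨ht1, ht2⟩ := hst j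
      have hident : (st j - s i) * π / L - (((j:ℕ):ℝ) - ((i:ℕ):ℝ) + 1/2) * π / N
          = ((st j - ((((j:ℕ):ℝ)+1/2)*L/N)) - (s i - (((i:ℕ):ℝ)*L/N))) * π / L := by
        field_simp
        ring
      rw [hident]
      exact hbound _ _ ht2 hs2
end
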